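/- Let G be a finite simple connected bipartite graph with parts of sizes n_1 and n_2, m edges, and maximum degree Δ. Then 2(n_2 − 1 + √(m − n_2 + 1))/√Δ ≤ E(G) ≤ 2√(n_1 · m). -/

import Mathlib

open Matrix Finset

/-- The square root of a positive semidefinite matrix, as defined in the older Mathlib
(`Matrix.PosSemidef.sqrt`, since removed). -/
noncomputable def Matrix.PosSemidef.sqrt {m : Type*} [Fintype m] [DecidableEq m]
    {A : Matrix m m ℝ} (hA : A.PosSemidef) : Matrix m m ℝ :=
  hA.1.eigenvectorUnitary.1 * diagonal ((↑) ∘ (√·) ∘ hA.1.eigenvalues) *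
    (star hA.1.eigenvectorUnitary : Matrix m m ℝ)

/-- The energy of the vertex `i` of a finite simple graph `G`:
the `(i,i)` entry of `|A| = (A Aᴴ)^{1/2}`, where `A` is the adjacency matrix. -/
noncomputable def vertexEnergy {n : ℕ} (G : SimpleGraph (Fin n)) [DecidableRel G.Adj]
    (i : Fin n) : ℝ :=
  (Matrix.posSemidef_self_mul_conjTranspose (G.adjMatrix ℝ)).sqrt i i

/-- The energy of a finite simple graph: the sum of the energies of its vertices. -/
noncomputable def graphEnergy {n : ℕ} (G : SimpleGraph (Fin n)) [DecidableRel G.Adj] : ℝ :=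
  ∑ i, vertexEnergy G i

/-!
Write `A = ∑ᵢ λᵢ uᵢ uᵢᵀ` for the adjacency matrix. Then `E(v) = ∑ᵢ |λᵢ| uᵢ(v)²`,
`deg v = (A²)ᵥᵥ = ∑ᵢ λᵢ² uᵢ(v)²` and `(A⁴)ᵥᵥ = ∑ᵢ λᵢ⁴ uᵢ(v)²`.

Upper bound: `E(G) = ∑ᵢ |λᵢ| ≤ √(rank A · ∑ᵢ λᵢ²)` by Cauchy–Schwarz, where `∑ᵢ λᵢ² = tr A² = 2m`,
and `rank A ≤ 2 n₁` because `A = PA + (PA)ᵀ` for the coordinate projection `P` onto `V₁`.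

Lower bound: the moments `k ↦ ∑ᵢ |λᵢ|ᵏ uᵢ(v)²` are log-convex, so `(A²)ᵥᵥ³ ≤ E(v)² (A⁴)ᵥᵥ`;
together with `(A⁴)ᵥᵥ ≤ deg(v)² Δ` this gives `E(v) ≥ √(deg v / Δ)`. An eigenvector of a
bipartite graph for `λ ≠ 0` has the same mass on both sides, hence `E(G) = 2 ∑_{v ∈ V₂} E(v)`.
Finally `∑_{v ∈ V₂} √(deg v) ≥ n₂ - 1 + √(m - n₂ + 1)`, since the degrees in `V₂` are at least
`1` (connectedness) and sum to `m`.
-/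

open scoped MatrixOrder

lemma Finset.sum_mul_sq_pow_three_le {ι : Type*} (s : Finset ι) {w μ : ι → ℝ}
    (hw : ∀ i ∈ s, 0 ≤ w i) (hμ : ∀ i ∈ s, 0 ≤ μ i) :
    (∑ i ∈ s, w i * μ i ^ 2) ^ 3 ≤ (∑ i ∈ s, w i * μ i) ^ 2 * ∑ i ∈ s, w i * μ i ^ 4 := by
  set M : ℕ → ℝ := fun k => ∑ i ∈ s, w i * μ i ^ k
  have hM : ∀ k, 0 ≤ M k := fun k =>
    sum_nonneg fun i hi => mul_nonneg (hw i hi) (pow_nonneg (hμ i hi) k)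
  have log_convex (k : ℕ) : M (k + 1) ^ 2 ≤ M k * M (k + 2) :=
    sum_sq_le_sum_mul_sum_of_sq_le_mul s
      (fun i hi => mul_nonneg (hw i hi) (pow_nonneg (hμ i hi) k))
      (fun i hi => mul_nonneg (hw i hi) (pow_nonneg (hμ i hi) (k + 2)))
      fun i _ => le_of_eq (by ring)
  have h₄ : M 2 * M 2 ^ 3 ≤ M 2 * (M 1 ^ 2 * M 4) :=
    calc M 2 * M 2 ^ 3 = (M 2 ^ 2) ^ 2 := by ring
      _ ≤ (M 1 * M 3) ^ 2 := pow_le_pow_left₀ (sq_nonneg _) (log_convex 1) 2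
      _ = M 1 ^ 2 * M 3 ^ 2 := by ring
      _ ≤ M 1 ^ 2 * (M 2 * M 4) := mul_le_mul_of_nonneg_left (log_convex 2) (sq_nonneg _)
      _ = M 2 * (M 1 ^ 2 * M 4) := by ring
  have hM₁ : M 1 = ∑ i ∈ s, w i * μ i := by simp [M]
  rw [← hM₁]
  change M 2 ^ 3 ≤ M 1 ^ 2 * M 4
  rcases (hM 2).eq_or_lt with h₀ | hpos
  · rw [← h₀, zero_pow three_ne_zero]
    exact mul_nonneg (sq_nonneg _) (hM 4)
  · exact le_of_mul_le_mul_left h₄ hpos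

lemma Finset.card_sub_one_add_sqrt_le_sum_sqrt {ι : Type*} (s : Finset ι) {f : ι → ℝ}
    (hf : ∀ i ∈ s, 1 ≤ f i) :
    #s - 1 + √(∑ i ∈ s, f i - #s + 1) ≤ ∑ i ∈ s, √(f i) := by
  -- with `y = √f - 1 ≥ 0` the claim becomes `∑ y² ≤ (∑ y)²`
  set y : ι → ℝ := fun i => √(f i) - 1
  have hy : ∀ i ∈ s, 0 ≤ y i := fun i hi => by
    simpa [y] using Real.one_le_sqrt.mpr (hf i hi)
  have hf_eq : ∀ i ∈ s, f i = y i ^ 2 + 2 * y i + 1 := fun i hi => by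
    simp only [y]
    nlinarith [Real.sq_sqrt (zero_le_one.trans (hf i hi))]
  have hsqrt : ∑ i ∈ s, √(f i) = ∑ i ∈ s, y i + #s := by simp [y]
  have hsum : ∑ i ∈ s, f i - #s + 1 = ∑ i ∈ s, y i ^ 2 + 2 * ∑ i ∈ s, y i + 1 := by
    rw [sum_congr rfl hf_eq]
    simp only [sum_add_distrib, ← mul_sum, sum_const, nsmul_eq_mul, mul_one]
    ring
  rw [hsqrt, hsum]
  have : √(∑ i ∈ s, y i ^ 2 + 2 * ∑ i ∈ s, y i + 1) ≤ ∑ i ∈ s, y i + 1 :=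
    Real.sqrt_le_iff.mpr ⟨by linarith [sum_nonneg hy], by
      nlinarith [sum_sq_le_sq_sum_of_nonneg hy]⟩
  linarith

namespace Matrix

lemma rank_add_le {m n K : Type*} [Fintype n] [Field K] (X Y : Matrix m n K) :
    (X + Y).rank ≤ X.rank + Y.rank := by
  rw [rank, rank, rank, mulVecLin_add]
  exact (Submodule.finrank_mono (LinearMap.range_add_le _ _)).trans
    (Submodule.finrank_add_le_finrank_add_finrank _ _)

variable {ι : Type*} [Fintype ι] [DecidableEq ι]

lemma PosSemidef.sqrt_eq_cfcSqrt {A : Matrix ι ι ℝ} (hA : A.PosSemidef) :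
    hA.sqrt = CFC.sqrt A := by
  rw [CFC.sqrt_eq_cfc, cfc_nnreal_eq_real _ A hA.nonneg, hA.1.cfc_eq]
  simp only [IsHermitian.cfc, Unitary.conjStarAlgAut_apply, PosSemidef.sqrt]
  congr 3
  ext i
  simp [Real.coe_sqrt, Real.coe_toNNReal', hA.eigenvalues_nonneg i]

lemma sqrt_self_mul_conjTranspose (A : Matrix ι ι ℝ) :
    (posSemidef_self_mul_conjTranspose A).sqrt = CFC.abs Aᴴ := by
  rw [PosSemidef.sqrt_eq_cfcSqrt, CFC.abs, star_eq_conjTranspose, conjTranspose_conjTranspose]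

namespace IsHermitian

variable {A : Matrix ι ι ℝ} (hA : A.IsHermitian)
include hA

lemma cfc_apply_self (f : ℝ → ℝ) (v : ι) :
    cfc f A v v = ∑ i, f (hA.eigenvalues i) * hA.eigenvectorBasis i v ^ 2 := by
  rw [hA.cfc_eq, IsHermitian.cfc, Unitary.conjStarAlgAut_apply, mul_apply]
  refine sum_congr rfl fun i _ => ?_
  simp [mul_diagonal, eigenvectorUnitary_apply]
  ring

lemma sum_eigenvectorBasis_sq (i : ι) : ∑ v, hA.eigenvectorBasis i v ^ 2 = 1 := by
  have h := hA.eigenvectorBasis.orthonormal.1 i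
  rw [EuclideanSpace.norm_eq] at h
  simpa [Real.sqrt_eq_one] using h

lemma sum_cfc_apply_self (f : ℝ → ℝ) (s : Finset ι) :
    ∑ v ∈ s, cfc f A v v = ∑ i, f (hA.eigenvalues i) * ∑ v ∈ s, hA.eigenvectorBasis i v ^ 2 := by
  simp only [hA.cfc_apply_self, mul_sum]
  exact sum_comm

lemma trace_cfc (f : ℝ → ℝ) : (cfc f A).trace = ∑ i, f (hA.eigenvalues i) := by
  simp [trace, hA.sum_cfc_apply_self, hA.sum_eigenvectorBasis_sq]

lemma cfcAbs_eq_cfc_abs : CFC.abs A = cfc (fun x : ℝ => |x|) A := by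
  rw [CFC.abs_eq_cfc_norm A hA.isSelfAdjoint]
  rfl

lemma sq_apply_self_pow_three_le (v : ι) :
    ((A ^ 2) v v) ^ 3 ≤ (cfc (fun x : ℝ => |x|) A v v) ^ 2 * (A ^ 4) v v := by
  rw [← cfc_pow_id (R := ℝ) A 2 hA.isSelfAdjoint, ← cfc_pow_id (R := ℝ) A 4 hA.isSelfAdjoint,
    hA.cfc_apply_self, hA.cfc_apply_self, hA.cfc_apply_self]
  have h := Finset.sum_mul_sq_pow_three_le univ (w := fun i => hA.eigenvectorBasis i v ^ 2)
    (μ := fun i => |hA.eigenvalues i|) (fun i _ => sq_nonneg _) (fun i _ => abs_nonneg _)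
  simpa only [sq_abs, Even.pow_abs (by decide : Even 4), mul_comm] using h

lemma sq_sum_abs_eigenvalues_le :
    (∑ i, |hA.eigenvalues i|) ^ 2 ≤ A.rank * (A ^ 2).trace := by
  set t := univ.filter fun i => hA.eigenvalues i ≠ 0
  have habs : ∑ i ∈ t, |hA.eigenvalues i| = ∑ i, |hA.eigenvalues i| :=
    sum_filter_of_ne fun i _ h => by simpa using h
  have hsq : ∑ i ∈ t, hA.eigenvalues i ^ 2 = ∑ i, hA.eigenvalues i ^ 2 :=
    sum_filter_of_ne fun i _ h => by simpa using h
  rw [hA.rank_eq_card_non_zero_eigs, Fintype.card_subtype,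
    ← cfc_pow_id (R := ℝ) A 2 hA.isSelfAdjoint, hA.trace_cfc, ← habs, ← hsq]
  simpa only [sq_abs] using
    sq_sum_le_card_mul_sum_sq (s := t) (f := fun i => |hA.eigenvalues i|)

end IsHermitian

end Matrix

namespace SimpleGraph

variable {V : Type*} [Fintype V] (G : SimpleGraph V) [DecidableRel G.Adj]

section
variable [DecidableEq V]

lemma adjMatrix_pow_apply_nonneg (k : ℕ) (v w : V) : 0 ≤ (G.adjMatrix ℝ ^ k) v w := by
  rw [adjMatrix_pow_apply_eq_card_walk]
  positivity

lemma adjMatrix_sq_apply_le (v w : V) : (G.adjMatrix ℝ ^ 2) v w ≤ G.degree w := by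
  rw [sq, mul_adjMatrix_apply, ← card_neighborFinset_eq_degree, card_eq_sum_ones, Nat.cast_sum]
  refine sum_le_sum fun u _ => ?_
  rw [adjMatrix_apply]
  split_ifs <;> norm_num

lemma sum_adjMatrix_sq_apply_le (v : V) :
    ∑ w, (G.adjMatrix ℝ ^ 2) v w ≤ G.degree v * G.maxDegree := by
  simp_rw [sq, adjMatrix_mul_apply]
  rw [sum_comm, ← card_neighborFinset_eq_degree, ← nsmul_eq_mul, ← sum_const]
  refine sum_le_sum fun u _ => ?_
  have hrow : ∑ w, G.adjMatrix ℝ u w = G.degree u := by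
    simp only [adjMatrix_apply, G.degree_eq_sum_if_adj]
  rw [hrow]
  exact_mod_cast G.degree_le_maxDegree u

lemma adjMatrix_pow_four_apply_self_le (v : V) :
    (G.adjMatrix ℝ ^ 4) v v ≤ G.degree v ^ 2 * G.maxDegree :=
  calc (G.adjMatrix ℝ ^ 4) v v = ∑ w, (G.adjMatrix ℝ ^ 2) v w * (G.adjMatrix ℝ ^ 2) w v := by
        rw [show 4 = 2 + 2 from rfl, pow_add, mul_apply]
    _ ≤ ∑ w, (G.adjMatrix ℝ ^ 2) v w * G.degree v :=
        sum_le_sum fun w _ => mul_le_mul_of_nonneg_left (G.adjMatrix_sq_apply_le w v)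
          (G.adjMatrix_pow_apply_nonneg 2 v w)
    _ ≤ G.degree v * G.maxDegree * G.degree v := by
        rw [← sum_mul]
        exact mul_le_mul_of_nonneg_right (G.sum_adjMatrix_sq_apply_le v) (Nat.cast_nonneg _)
    _ = G.degree v ^ 2 * G.maxDegree := by ring

lemma trace_adjMatrix_sq : (G.adjMatrix ℝ ^ 2).trace = 2 * #G.edgeFinset := by
  simp only [trace, Matrix.diag, sq, adjMatrix_mul_self_apply_self]
  exact_mod_cast G.sum_degrees_eq_twice_card_edges

end

variable {G} {s t : Finset V}

lemma IsBipartiteWith.sum_mul_adjMatrix_mulVec (h : G.IsBipartiteWith s t) (x : V → ℝ) :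
    ∑ v ∈ s, x v * (G.adjMatrix ℝ *ᵥ x) v = ∑ v ∈ t, x v * (G.adjMatrix ℝ *ᵥ x) v := by
  have expand : ∀ {s t : Finset V}, G.IsBipartiteWith s t →
      ∑ v ∈ s, x v * (G.adjMatrix ℝ *ᵥ x) v =
        ∑ v ∈ s, ∑ w ∈ t, if G.Adj v w then x v * x w else 0 := fun h =>
    sum_congr rfl fun v hv => by
      rw [adjMatrix_mulVec_apply, isBipartiteWith_neighborFinset h hv, sum_filter, mul_sum]
      exact sum_congr rfl fun w _ => by split_ifs <;> simp
  rw [expand h, expand h.symm, sum_comm]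
  exact sum_congr rfl fun v _ => sum_congr rfl fun w _ => by
    simp only [G.adj_comm w v, mul_comm (x w)]

lemma IsBipartiteWith.sum_sq_eq_of_mulVec_eq_smul (h : G.IsBipartiteWith s t) {μ : ℝ}
    {x : V → ℝ} (hx : G.adjMatrix ℝ *ᵥ x = μ • x) (hμ : μ ≠ 0) :
    ∑ v ∈ s, x v ^ 2 = ∑ v ∈ t, x v ^ 2 := by
  have := h.sum_mul_adjMatrix_mulVec x
  simp only [hx, Pi.smul_apply, smul_eq_mul] at this
  refine mul_left_cancel₀ hμ ?_
  simpa only [mul_sum, sq, mul_left_comm] using this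

lemma IsBipartiteWith.rank_adjMatrix_le [DecidableEq V] (h : G.IsBipartiteWith s t) :
    (G.adjMatrix ℝ).rank ≤ 2 * #s := by
  set D : Matrix V V ℝ := diagonal fun v => if v ∈ s then 1 else 0
  have hsplit : G.adjMatrix ℝ = D * G.adjMatrix ℝ + (D * G.adjMatrix ℝ)ᵀ := by
    ext v w
    rw [Matrix.add_apply, transpose_apply, diagonal_mul, diagonal_mul]
    simp only [adjMatrix_apply, G.adj_comm w v]
    have hst := Finset.disjoint_coe.mp h.disjoint
    by_cases hvw : G.Adj v w
    · rcases h.mem_of_adj hvw with ⟨hv, hw⟩ | ⟨hv, hw⟩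
      · simp [hvw, Finset.mem_coe.mp hv, Finset.disjoint_right.mp hst hw]
      · simp [hvw, Finset.mem_coe.mp hw, Finset.disjoint_right.mp hst hv]
    · simp [hvw]
  have hD : (D * G.adjMatrix ℝ).rank ≤ #s := by
    refine (rank_mul_le_left _ _).trans_eq ?_
    rw [rank_diagonal, Fintype.card_subtype]
    congr 1
    ext v
    simp
  calc (G.adjMatrix ℝ).rank = (D * G.adjMatrix ℝ + (D * G.adjMatrix ℝ)ᵀ).rank :=
        congrArg rank hsplit
    _ ≤ (D * G.adjMatrix ℝ).rank + (D * G.adjMatrix ℝ)ᵀ.rank := rank_add_le _ _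
    _ ≤ 2 * #s := by rw [rank_transpose]; omega

end SimpleGraph

section Energy

open SimpleGraph

variable {n : ℕ} (G : SimpleGraph (Fin n)) [DecidableRel G.Adj]

lemma vertexEnergy_eq_cfc_abs (v : Fin n) :
    vertexEnergy G v = cfc (fun x : ℝ => |x|) (G.adjMatrix ℝ) v v := by
  rw [vertexEnergy, sqrt_self_mul_conjTranspose, (G.isHermitian_adjMatrix ℝ).eq,
    (G.isHermitian_adjMatrix ℝ).cfcAbs_eq_cfc_abs]

lemma vertexEnergy_nonneg (v : Fin n) : 0 ≤ vertexEnergy G v := by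
  rw [vertexEnergy_eq_cfc_abs, (G.isHermitian_adjMatrix ℝ).cfc_apply_self]
  exact sum_nonneg fun i _ => by positivity

lemma graphEnergy_eq_sum_abs_eigenvalues :
    graphEnergy G = ∑ i, |(G.isHermitian_adjMatrix ℝ).eigenvalues i| := by
  simp only [graphEnergy, vertexEnergy_eq_cfc_abs]
  exact (G.isHermitian_adjMatrix ℝ).trace_cfc _

lemma degree_le_vertexEnergy_sq_mul_maxDegree (v : Fin n) :
    (G.degree v : ℝ) ≤ vertexEnergy G v ^ 2 * G.maxDegree := by
  have hcube := (G.isHermitian_adjMatrix ℝ).sq_apply_self_pow_three_le v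
  rw [← vertexEnergy_eq_cfc_abs, pow_two (G.adjMatrix ℝ), adjMatrix_mul_self_apply_self] at hcube
  set d : ℝ := (G.degree v : ℝ)
  have h : d ^ 2 * d ≤ d ^ 2 * (vertexEnergy G v ^ 2 * G.maxDegree) :=
    calc d ^ 2 * d = d ^ 3 := by ring
      _ ≤ vertexEnergy G v ^ 2 * (G.adjMatrix ℝ ^ 4) v v := hcube
      _ ≤ vertexEnergy G v ^ 2 * (d ^ 2 * G.maxDegree) :=
          mul_le_mul_of_nonneg_left (G.adjMatrix_pow_four_apply_self_le v) (sq_nonneg _)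
      _ = d ^ 2 * (vertexEnergy G v ^ 2 * G.maxDegree) := by ring
  rcases (show 0 ≤ d from Nat.cast_nonneg _).eq_or_lt with hd | hd
  · rw [← hd]
    positivity
  · exact le_of_mul_le_mul_left h (pow_pos hd 2)

lemma sqrt_degree_div_le_vertexEnergy (v : Fin n) :
    √(G.degree v) / √(G.maxDegree) ≤ vertexEnergy G v := by
  refine div_le_of_le_mul₀ (Real.sqrt_nonneg _) (vertexEnergy_nonneg G v) ?_
  calc √(G.degree v) ≤ √(vertexEnergy G v ^ 2 * G.maxDegree) :=
        Real.sqrt_le_sqrt (degree_le_vertexEnergy_sq_mul_maxDegree G v)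
    _ = vertexEnergy G v * √(G.maxDegree) := by
        rw [Real.sqrt_mul (sq_nonneg _), Real.sqrt_sq (vertexEnergy_nonneg G v)]

variable {G} {s t : Finset (Fin n)}

lemma SimpleGraph.IsBipartiteWith.sum_vertexEnergy_eq (h : G.IsBipartiteWith s t) :
    ∑ v ∈ s, vertexEnergy G v = ∑ v ∈ t, vertexEnergy G v := by
  have hA := G.isHermitian_adjMatrix ℝ
  simp only [vertexEnergy_eq_cfc_abs, hA.sum_cfc_apply_self]
  refine sum_congr rfl fun i _ => ?_
  by_cases hν : hA.eigenvalues i = 0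
  · simp [hν]
  · rw [h.sum_sq_eq_of_mulVec_eq_smul (hA.mulVec_eigenvectorBasis i) hν]

lemma SimpleGraph.IsBipartiteWith.graphEnergy_eq_two_mul (h : G.IsBipartiteWith s t)
    (hcover : s ∪ t = univ) :
    graphEnergy G = 2 * ∑ v ∈ t, vertexEnergy G v := by
  rw [graphEnergy, ← hcover, sum_union (disjoint_coe.mp h.disjoint), h.sum_vertexEnergy_eq,
    two_mul]

lemma SimpleGraph.IsBipartiteWith.graphEnergy_le (h : G.IsBipartiteWith s t) :
    graphEnergy G ≤ 2 * √(#s * #G.edgeFinset) := by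
  have hsq := (G.isHermitian_adjMatrix ℝ).sq_sum_abs_eigenvalues_le
  rw [← graphEnergy_eq_sum_abs_eigenvalues, trace_adjMatrix_sq] at hsq
  have hrank : ((G.adjMatrix ℝ).rank : ℝ) ≤ 2 * #s := by exact_mod_cast h.rank_adjMatrix_le
  calc graphEnergy G ≤ √(2 * #s * (2 * #G.edgeFinset)) :=
        Real.le_sqrt_of_sq_le (hsq.trans (mul_le_mul_of_nonneg_right hrank (by positivity)))
    _ = 2 * √(#s * #G.edgeFinset) := by
        rw [show (2 * #s * (2 * #G.edgeFinset) : ℝ) = 2 ^ 2 * (#s * #G.edgeFinset) by ring,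
          Real.sqrt_mul (by positivity), Real.sqrt_sq zero_le_two]

lemma SimpleGraph.IsBipartiteWith.le_graphEnergy (hconn : G.Connected)
    (h : G.IsBipartiteWith s t) (hcover : s ∪ t = univ) :
    2 * (#t - 1 + √(#G.edgeFinset - #t + 1)) / √(G.maxDegree) ≤ graphEnergy G := by
  by_cases hΔ : G.maxDegree = 0
  · -- `√0 = 0` and `x / 0 = 0`, so the bound reads `0 ≤ E(G)`
    rw [hΔ, Nat.cast_zero, Real.sqrt_zero, div_zero, graphEnergy]
    exact sum_nonneg fun v _ => vertexEnergy_nonneg G v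
  have := hconn.nonempty
  have : Nontrivial (Fin n) := Fin.nontrivial_iff_two_le.mpr <| by
    have := G.maxDegree_lt_card_verts
    rw [Fintype.card_fin] at this
    omega
  have hdeg : ∀ v ∈ t, (1 : ℝ) ≤ G.degree v := fun v _ => by
    exact_mod_cast hconn.preconnected.degree_pos_of_nontrivial v
  have hsum := card_sub_one_add_sqrt_le_sum_sqrt t hdeg
  rw [← Nat.cast_sum, isBipartiteWith_sum_degrees_eq_card_edges' h] at hsum
  rw [h.graphEnergy_eq_two_mul hcover, mul_div_assoc]
  gcongr
  calc (#t - 1 + √(#G.edgeFinset - #t + 1)) / √(G.maxDegree)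
      ≤ (∑ v ∈ t, √(G.degree v)) / √(G.maxDegree) := by gcongr
    _ = ∑ v ∈ t, √(G.degree v) / √(G.maxDegree) := sum_div _ _ _
    _ ≤ ∑ v ∈ t, vertexEnergy G v := sum_le_sum fun v _ => sqrt_degree_div_le_vertexEnergy G v

end Energy

theorem stmt_15 {n : ℕ} (G : SimpleGraph (Fin n)) [DecidableRel G.Adj]
    (hconn : G.Connected)
    (V₁ V₂ : Finset (Fin n)) (hdisj : Disjoint V₁ V₂) (hcover : V₁ ∪ V₂ = Finset.univ)
    (hbip : ∀ u v : Fin n, G.Adj u v → (u ∈ V₁ ∧ v ∈ V₂) ∨ (u ∈ V₂ ∧ v ∈ V₁))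
    (n₁ n₂ m : ℕ) (hn₁ : n₁ = V₁.card) (hn₂ : n₂ = V₂.card)
    (hm : m = G.edgeFinset.card) :
    2 * ((n₂ : ℝ) - 1 + Real.sqrt ((m : ℝ) - (n₂ : ℝ) + 1)) / Real.sqrt (G.maxDegree) ≤
      graphEnergy G ∧
    graphEnergy G ≤ 2 * Real.sqrt ((n₁ : ℝ) * (m : ℝ)) := by
  have h : G.IsBipartiteWith V₁ V₂ := ⟨disjoint_coe.mpr hdisj, fun u v => hbip u v⟩
  subst hn₁ hn₂ hm
  exact ⟨h.le_graphEnergy hconn hcover, h.graphEnergy_le⟩
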